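/- arXiv:1306.2195 — 2 statements merged into one kernel-verified Lean document; each statement's English description precedes it below -/
import Mathlib

section
/- Let v : ℝ^m → ℍ be a measurable vector field (re (v x) = 0 for all x) with ∫ ‖v x‖² dx = 1, n a purely imaginary unit quaternion, α ∈ [0, π], q = exp((α/2) • n), and C = ∫ star (q * v x * star q) * v x dx. Set φ = Real.arccos (re C / ‖C‖) and let p = Real.cos (φ/2) + Real.sin (φ/2) • (‖im C‖⁻¹ • im C) if im C ≠ 0, and p = 1 if im C = 0. Then the composed rotor r = star p * q has nonnegative real part: re (star p * q) ≥ 0; in particular the composed rotation angle β = 2 * Real.arccos (re r) lies in [0, π]. -/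
open Quaternion MeasureTheory

noncomputable instance : MeasurableSpace ℍ[ℝ] := borel _
instance : BorelSpace ℍ[ℝ] := ⟨rfl⟩

/-!
Write `q = cos (α/2) + sin (α/2) • n`. For a pure quaternion `w`, the vector part of
`-(q w q⋆) w` is the cross product `w × (q w q⋆)`, whose component along `n` is
`2 cos (α/2) sin (α/2) ‖n × w‖² ≥ 0`; integrating, `⟪n, C⟫ ≥ 0`. Since
`re (p⋆ q) = ⟪p, q⟫ = cos (φ/2) cos (α/2) + sin (φ/2) sin (α/2) ‖im C‖⁻¹ ⟪im C, n⟫`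
and `φ ∈ [0, π]`, every term is nonnegative.
-/

local notation "⟪" x ", " y "⟫" => @inner ℝ _ _ x y

theorem inner_integral_nonneg {X E : Type*} [MeasurableSpace X] {μ : Measure X}
    [NormedAddCommGroup E] [InnerProductSpace ℝ E] [CompleteSpace E] {f : X → E} {a : E}
    (h : ∀ x, 0 ≤ ⟪a, f x⟫) : 0 ≤ ⟪a, ∫ x, f x ∂μ⟫ := by
  by_cases hf : Integrable f μ
  · rw [← integral_inner hf]
    exact integral_nonneg h
  · simp [integral_undef hf]

theorem Real.cos_half_nonneg {θ : ℝ} (hl : -Real.pi ≤ θ) (hr : θ ≤ Real.pi) :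
    0 ≤ Real.cos (θ / 2) :=
  Real.cos_nonneg_of_mem_Icc ⟨by linarith, by linarith⟩

theorem Real.sin_half_nonneg {θ : ℝ} (hl : 0 ≤ θ) (hr : θ ≤ 2 * Real.pi) :
    0 ≤ Real.sin (θ / 2) :=
  Real.sin_nonneg_of_nonneg_of_le_pi (by linarith) (by linarith)

namespace Quaternion

theorem re_star_mul (p q : ℍ[ℝ]) : (star p * q).re = ⟪p, q⟫ := by
  rw [inner_def]
  simp only [re_mul, re_star, imI_star, imJ_star, imK_star]
  ring

theorem inner_eq_re_mul_re_add_inner_im (p q : ℍ[ℝ]) :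
    ⟪p, q⟫ = p.re * q.re + ⟪p.im, q.im⟫ := by
  simp only [inner_def, re_mul, re_star, imI_star, imJ_star, imK_star, re_im, imI_im, imJ_im,
    imK_im]
  ring

theorem exp_smul_of_re_eq_zero_of_norm_eq_one {n : ℍ[ℝ]} (hre : n.re = 0) (hnorm : ‖n‖ = 1)
    (t : ℝ) : NormedSpace.exp (t • n) = ↑(Real.cos t) + Real.sin t • n := by
  rw [exp_of_re_eq_zero _ (by simp [hre]), norm_smul, hnorm, mul_one, Real.norm_eq_abs,
    Real.cos_abs, smul_smul]
  rcases eq_or_ne t 0 with rfl | ht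
  · simp
  · congr 2
    rcases abs_choice t with h | h <;> rw [h] <;> field_simp
    simp [Real.sin_neg]

/-- `(n * w).im` is the cross product `n × w` of the pure quaternions `n` and `w`. -/
theorem inner_star_conj_mul_eq_mul_norm_im_sq (c s : ℝ) {n w : ℍ[ℝ]} (hn : n.re = 0)
    (hw : w.re = 0) :
    ⟪n, star ((c + s • n) * w * star (c + s • n)) * w⟫ = 2 * c * s * ‖(n * w).im‖ ^ 2 := by
  rw [sq, ← normSq_eq_norm_mul_self, normSq_def', inner_def]
  simp only [re_mul, imI_mul, imJ_mul, imK_mul, re_star, imI_star, imJ_star, imK_star,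
    re_add, imI_add, imJ_add, imK_add, re_coe, imI_coe, imJ_coe, imK_coe,
    re_smul, imI_smul, imJ_smul, imK_smul, re_im, imI_im, imJ_im, imK_im, hn, hw, smul_eq_mul]
  ring

end Quaternion

theorem composed_rotor_re_nonneg_general
    {m : ℕ} (v : EuclideanSpace ℝ (Fin m) → ℍ[ℝ])
    (hre : ∀ x, (v x).re = 0)
    (n : ℍ[ℝ]) (hn_re : n.re = 0) (hn_norm : ‖n‖ = 1)
    (α : ℝ) (hα0 : 0 ≤ α) (hαπ : α ≤ Real.pi)
    (q C : ℍ[ℝ])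
    (hq : q = NormedSpace.exp ((α / 2) • n))
    (hC : C = ∫ x, star (q * v x * star q) * v x)
    (φ : ℝ) (hφ : φ = Real.arccos (C.re / ‖C‖))
    (p : ℍ[ℝ])
    (hp₁ : C.im ≠ 0 → p = ((Real.cos (φ / 2) : ℝ) : ℍ[ℝ])
        + Real.sin (φ / 2) • (‖C.im‖⁻¹ • C.im))
    (hp₀ : C.im = 0 → p = 1) :
    0 ≤ (star p * q).re := by
  rw [exp_smul_of_re_eq_zero_of_norm_eq_one hn_re hn_norm] at hq
  have hc := Real.cos_half_nonneg (by linarith [Real.pi_pos]) hαπ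
  have hs := Real.sin_half_nonneg hα0 (by linarith [Real.pi_pos])
  have hnC : 0 ≤ ⟪n, C⟫ := hC ▸ inner_integral_nonneg fun x => by
    rw [hq, inner_star_conj_mul_eq_mul_norm_im_sq _ _ hn_re (hre x)]
    positivity
  have hCn : 0 ≤ ⟪C.im, n.im⟫ := by
    rwa [inner_eq_re_mul_re_add_inner_im, hn_re, zero_mul, zero_add, real_inner_comm] at hnC
  rw [re_star_mul, inner_eq_re_mul_re_add_inner_im, hq]
  rcases eq_or_ne C.im 0 with him | him
  · simpa [hp₀ him, hn_re] using hc
  · have hφ0 : 0 ≤ φ := hφ ▸ Real.arccos_nonneg _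
    have hφπ : φ ≤ Real.pi := hφ ▸ Real.arccos_le_pi _
    have hcφ := Real.cos_half_nonneg (by linarith [Real.pi_pos]) hφπ
    have hsφ := Real.sin_half_nonneg hφ0 (by linarith [Real.pi_pos])
    simp only [hp₁ him, re_add, re_coe, re_smul, re_im, im_add, im_coe, im_smul, im_idem,
      hn_re, smul_eq_mul, mul_zero, add_zero, zero_add, real_inner_smul_left, real_inner_smul_right]
    have hinv : 0 ≤ ‖C.im‖⁻¹ := inv_nonneg.2 (norm_nonneg _)
    exact add_nonneg (mul_nonneg hcφ hc) (mul_nonneg hs (mul_nonneg hsφ (mul_nonneg hinv hCn)))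

theorem composed_rotor_re_nonneg
    {m : ℕ} (v : EuclideanSpace ℝ (Fin m) → ℍ[ℝ])
    (hmeas : Measurable v)
    (hre : ∀ x, (v x).re = 0)
    (hnorm : ∫ x, ‖v x‖ ^ 2 = 1)
    (n : ℍ[ℝ]) (hn_re : n.re = 0) (hn_norm : ‖n‖ = 1)
    (α : ℝ) (hα0 : 0 ≤ α) (hαπ : α ≤ Real.pi)
    (q C : ℍ[ℝ])
    (hq : q = NormedSpace.exp ((α / 2) • n))
    (hC : C = ∫ x, star (q * v x * star q) * v x)
    (φ : ℝ) (hφ : φ = Real.arccos (C.re / ‖C‖))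
    (p : ℍ[ℝ])
    (hp₁ : C.im ≠ 0 → p = ((Real.cos (φ / 2) : ℝ) : ℍ[ℝ])
        + Real.sin (φ / 2) • (‖C.im‖⁻¹ • C.im))
    (hp₀ : C.im = 0 → p = 1) :
    0 ≤ (star p * q).re :=
  composed_rotor_re_nonneg_general v hre n hn_re hn_norm α hα0 hαπ q C hq hC φ hφ p hp₁ hp₀
end

section
/- Let v : ℝ^m → ℍ be a measurable, square integrable vector field (re (v x) = 0 for all x) with ∫ ‖v∥ x‖² dx > 0, where v∥ x = v x − ⟪v x, n⟫ • n for a purely imaginary unit quaternion n. Let α ∈ [0, π), q = exp((α/2) • n), and C = ∫ star (q * v x * star q) * v x dx. Then im C = 0 if and only if α = 0; i.e., the correlation of the rotated field with the original is real precisely when there is no rotational misalignment. -/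
/-!
Writing `q = cos (α/2) + sin (α/2) n`, a direct computation shows that the `n`-component of
`star (q w q⋆) w` is `sin α ‖w∥‖²` for every imaginary `w`. Integrating, the `n`-component of the
correlation is `sin α ∫ ‖v∥‖²`, which is positive for `0 < α < π`; for `α = 0` the integrand is
`star (v x) * v x = ‖v x‖²`, which is real.
-/

open Quaternion MeasureTheory

namespace Quaternion

theorem exp_smul_of_re_eq_zero {n : ℍ[ℝ]} (hn_re : n.re = 0) (hn_norm : ‖n‖ = 1) (t : ℝ) :
    NormedSpace.exp (t • n) = ↑(Real.cos t) + Real.sin t • n := by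
  have hre : (t • n).re = 0 := by simp [hn_re]
  rw [exp_of_re_eq_zero _ hre, norm_smul, hn_norm, mul_one, Real.norm_eq_abs, Real.cos_abs,
    smul_smul]
  rcases eq_or_ne t 0 with rfl | ht
  · simp
  · rcases abs_choice t with h | h <;> simp [h, ht]

theorem inner_eq_zero_of_im_eq_zero {z n : ℍ[ℝ]} (hz : z.im = 0) (hn_re : n.re = 0) :
    inner ℝ z n = 0 := by
  rw [← re_add_im z, hz, add_zero]
  simp [inner_def, hn_re]

theorem inner_star_conj_mul_self {n w : ℍ[ℝ]} (hn_re : n.re = 0) (hn : normSq n = 1)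
    (hw : w.re = 0) (c s : ℝ) :
    inner ℝ (star ((↑c + s • n) * w * star (↑c + s • n)) * w) n
      = 2 * s * c * ‖w - inner ℝ w n • n‖ ^ 2 := by
  have hn1 : n.imI ^ 2 + n.imJ ^ 2 + n.imK ^ 2 = 1 := by
    rw [normSq_def', hn_re] at hn
    linarith
  rw [← real_inner_self_eq_norm_sq]
  simp only [inner_def, re_mul, re_add, imI_add, imJ_add, imK_add, re_smul, imI_smul, imJ_smul,
    imK_smul, re_star, imI_star, imJ_star, imK_star, imI_mul, imJ_mul, imK_mul, re_coe, imI_coe,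
    imJ_coe, imK_coe, re_sub, imI_sub, imJ_sub, imK_sub, hn_re, hw, smul_eq_mul]
  linear_combination 2 * c * s * (w.imI ^ 2 + w.imJ ^ 2 + w.imK ^ 2
    - (n.imI * w.imI + n.imJ * w.imJ + n.imK * w.imK) ^ 2) * hn1

theorem inner_star_exp_conj_mul_self {n w : ℍ[ℝ]} (hn_re : n.re = 0) (hn_norm : ‖n‖ = 1)
    (hw : w.re = 0) (α : ℝ) :
    inner ℝ
        (star (NormedSpace.exp ((α / 2) • n) * w * star (NormedSpace.exp ((α / 2) • n))) * w) n
      = Real.sin α * ‖w - inner ℝ w n • n‖ ^ 2 := by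
  have hn : normSq n = 1 := by rw [normSq_eq_norm_mul_self, hn_norm, one_mul]
  rw [exp_smul_of_re_eq_zero hn_re hn_norm, inner_star_conj_mul_self hn_re hn hw,
    ← Real.sin_two_mul, mul_div_cancel₀ α two_ne_zero]

end Quaternion

section Correlation

variable {X : Type*} [MeasurableSpace X] {μ : Measure X}

theorem integrable_star_conj_mul_self {v : X → ℍ[ℝ]} (hv : AEStronglyMeasurable v μ)
    (hsq : Integrable (fun x => ‖v x‖ ^ 2) μ) (q : ℍ[ℝ]) :
    Integrable (fun x => star (q * v x * star q) * v x) μ := by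
  refine (hsq.const_mul (‖q‖ ^ 2)).mono' ?_ (Filter.Eventually.of_forall fun x => ?_)
  · fun_prop
  · rw [norm_mul, norm_star, norm_mul, norm_mul, norm_star]
    exact le_of_eq (by ring)

theorem im_integral_star_mul_self (v : X → ℍ[ℝ]) : (∫ x, star (v x) * v x ∂μ).im = 0 := by
  simp_rw [star_mul_self, ← algebraMap_def, Algebra.algebraMap_eq_smul_one]
  rw [integral_smul_const]
  simp

end Correlation

theorem correlation_real_iff_no_rotation
    {m : ℕ} (v : EuclideanSpace ℝ (Fin m) → ℍ[ℝ])
    (hmeas : Measurable v)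
    (hre : ∀ x, (v x).re = 0)
    (hsq : Integrable (fun x => ‖v x‖ ^ 2))
    (n : ℍ[ℝ]) (hn_re : n.re = 0) (hn_norm : ‖n‖ = 1)
    (hpos : 0 < ∫ x, ‖v x - (inner ℝ (v x) n : ℝ) • n‖ ^ 2)
    (α : ℝ) (hα0 : 0 ≤ α) (hαπ : α < Real.pi) :
    (∫ x, star (NormedSpace.exp ((α / 2) • n) * v x
        * star (NormedSpace.exp ((α / 2) • n))) * v x).im = 0 ↔ α = 0 := by
  constructor
  · intro him
    by_contra hα
    have hint := integrable_star_conj_mul_self hmeas.aestronglyMeasurable hsq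
      (NormedSpace.exp ((α / 2) • n))
    have hn_component := integral_inner (𝕜 := ℝ) hint n
    simp_rw [real_inner_comm _ n, inner_star_exp_conj_mul_self hn_re hn_norm (hre _)] at hn_component
    rw [integral_const_mul, inner_eq_zero_of_im_eq_zero him hn_re] at hn_component
    have hsin : 0 < Real.sin α := Real.sin_pos_of_pos_of_lt_pi (hα0.lt_of_ne' hα) hαπ
    exact (mul_pos hsin hpos).ne' hn_component
  · rintro rfl
    simpa using im_integral_star_mul_self v
end
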